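/- Let p and q be primes with p = q^k + 1 for some integer k ≥ 1. Then for every integer n ≥ 1 and every integer r ≥ 2 with p ∤ r, the solution S(p, q^n, r) is maximal: S(p, q^n, r) = {m ∈ ℕ : m ≥ 2 and p ∤ m}. -/

import Mathlib

/-- The smallest set `S(d,e,r)` of positive integers such that `r ∈ S`,
`n ∈ S` whenever `n^e ∈ S`, and `(n+d)^e ∈ S` whenever `n ∈ S`. -/
inductive GenS (d e r : ℕ) : ℕ → Prop
  | base : GenS d e r r
  | down (n : ℕ) : GenS d e r (n ^ e) → GenS d e r n
  | up (n : ℕ) : GenS d e r n → GenS d e r ((n + d) ^ e)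

/-!
Membership in `S(p, e, r)` is preserved by adding `p` (apply `(c)` then `(b)`), so `S` is closed
upwards within residue classes mod `p`; and `m` lies in `S` as soon as some `m ^ e ^ s` does.
Applying `(c)` `K` times to `r` yields an element of `S` congruent to `r ^ e ^ K`. When
`p - 1 ∣ e ^ K`, Fermat's little theorem makes this element, and every large enough `m ^ e ^ s`
with `p ∤ m`, congruent to `1` mod `p`; hence all such `m` lie in `S`. For `p = q ^ k + 1` and
`e = q ^ n` one takes `K = k`.
-/

theorem Nat.ModEq.pow_pow_eq_one {p e K b : ℕ} (hp : p.Prime) (hK : p - 1 ∣ e ^ K)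
    (hb : ¬ p ∣ b) : b ^ e ^ K ≡ 1 [MOD p] := by
  obtain ⟨c, hc⟩ := hK
  have hfermat := Nat.ModEq.pow_card_sub_one_eq_one hp ((hp.coprime_iff_not_dvd.mpr hb).symm)
  simpa only [hc, pow_mul, one_pow] using hfermat.pow c

namespace GenS

variable {d e r : ℕ}

theorem add_self {m : ℕ} (h : GenS d e r m) : GenS d e r (m + d) :=
  down _ (up _ h)

theorem add_mul_self {m : ℕ} (h : GenS d e r m) (j : ℕ) : GenS d e r (m + d * j) := by
  induction j with
  | zero => simpa using h
  | succ j ih => simpa only [mul_add_one, ← add_assoc] using ih.add_self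

theorem of_le_of_modEq {a b : ℕ} (ha : GenS d e r a) (hab : a ≤ b) (hmod : a ≡ b [MOD d]) :
    GenS d e r b := by
  obtain ⟨j, hj⟩ := (Nat.modEq_iff_dvd' hab).mp hmod
  simpa only [← hj, Nat.add_sub_cancel' hab] using ha.add_mul_self j

theorem of_pow_pow {m : ℕ} : ∀ s : ℕ, GenS d e r (m ^ e ^ s) → GenS d e r m
  | 0, h => by simpa using h
  | s + 1, h => of_pow_pow s (down _ (by rwa [← pow_mul, ← pow_succ]))

theorem exists_modEq_pow_pow {a : ℕ} (ha : GenS d e r a) (i : ℕ) :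
    ∃ b, GenS d e r b ∧ b ≡ a ^ e ^ i [MOD d] := by
  induction i with
  | zero => exact ⟨a, ha, by simp [Nat.ModEq.refl]⟩
  | succ i ih =>
    obtain ⟨b, hb, hba⟩ := ih
    have hbd : b + d ≡ b [MOD d] := by simp [Nat.ModEq]
    refine ⟨(b + d) ^ e, up _ hb, ?_⟩
    rw [pow_succ, pow_mul]
    exact (hbd.trans hba).pow e

theorem two_le_and_not_dvd {p m : ℕ} (hp : p.Prime) (he : e ≠ 0) (hr : 2 ≤ r) (hpr : ¬ p ∣ r)
    (hm : GenS p e r m) : 2 ≤ m ∧ ¬ p ∣ m := by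
  induction hm with
  | base => exact ⟨hr, hpr⟩
  | down n _ ih =>
    obtain ⟨h2, hpn⟩ := ih
    refine ⟨?_, fun hdvd => hpn (dvd_pow hdvd he)⟩
    by_contra! hn
    have : n ^ e ≤ 1 := pow_le_one₀ n.zero_le (by omega)
    omega
  | up n _ ih =>
    obtain ⟨h2, hpn⟩ := ih
    exact ⟨(show 2 ≤ n + p by omega).trans (Nat.le_self_pow he _),
      fun hdvd => hpn (Nat.dvd_add_self_right.mp (hp.dvd_of_dvd_pow hdvd))⟩

theorem of_two_le_of_not_dvd {p e r K m : ℕ} (hp : p.Prime) (he : 2 ≤ e)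
    (hK : p - 1 ∣ e ^ K) (hpr : ¬ p ∣ r) (hm : 2 ≤ m) (hpm : ¬ p ∣ m) : GenS p e r m := by
  obtain ⟨a, ha, har⟩ := exists_modEq_pow_pow (base (d := p) (e := e)) K
  have ha1 : a ≡ 1 [MOD p] := har.trans (Nat.ModEq.pow_pow_eq_one hp hK hpr)
  set s := a + K
  have hs : m ^ e ^ s ≡ 1 [MOD p] :=
    Nat.ModEq.pow_pow_eq_one hp (hK.trans (pow_dvd_pow e (by omega))) hpm
  have has : a ≤ m ^ e ^ s :=
    calc a ≤ s := by omega
      _ ≤ e ^ s := (Nat.lt_pow_self (by omega)).le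
      _ ≤ m ^ e ^ s := (Nat.lt_pow_self (by omega)).le
  exact of_pow_pow s (ha.of_le_of_modEq has (ha1.trans hs.symm))

end GenS

/-- If `p` and `q` are primes with `p = q^k + 1` for some `k ≥ 1`, then for
every `n ≥ 1` and `r ≥ 2` with `p ∤ r`, the solution `S(p, qⁿ, r)` is maximal. -/
theorem genS_maximal_prime_power (p q : ℕ) (hp : p.Prime) (hq : q.Prime)
    (h : ∃ k : ℕ, 1 ≤ k ∧ p = q ^ k + 1) (n : ℕ) (hn : 1 ≤ n)
    (r : ℕ) (hr : 2 ≤ r) (hpr : ¬ (p ∣ r)) :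
    {m : ℕ | GenS p (q ^ n) r m} = {m : ℕ | 2 ≤ m ∧ ¬ (p ∣ m)} := by
  obtain ⟨k, -, rfl⟩ := h
  have he : 2 ≤ q ^ n := hq.two_le.trans (Nat.le_self_pow (by omega) q)
  have hK : q ^ k + 1 - 1 ∣ (q ^ n) ^ k := by
    rw [Nat.add_sub_cancel, ← pow_mul, mul_comm, pow_mul]
    exact dvd_pow_self _ (by omega)
  ext m
  exact ⟨GenS.two_le_and_not_dvd hp (by omega) hr hpr,
    fun ⟨hm, hpm⟩ => GenS.of_two_le_of_not_dvd hp he hK hpr hm hpm⟩
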